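/- Let (X,T) be a minimal topological dynamical system and p ≥ 1 an integer. Suppose V and W are closed subsets of X such that both the collection {V, T^{-1}V, …, T^{-p+1}V} and the collection {W, T^{-1}W, …, T^{-p+1}W} consist of pairwise disjoint sets whose union is X. Then there exists i with 0 ≤ i < p such that W = T^{-i}V; that is, the partition in property (3) of the eigenvalue characterization is unique up to cyclic permutation. -/

import Mathlib

/-!
Pick `x ∈ W` and `i` with `T^i x ∈ V`. Both `n ↦ T^{-n}V` and `n ↦ T^{-n}W` are `p`-periodic,
so the orbit saturation `E = ⋃ₙ T^{-n}(W ∩ T^{-i}V)` is a finite union of closed sets; it contains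
the orbit of `x`, hence `E = X` by minimality. A point of `W` lies in some `T^{-n}W ∩ T^{-(n+i)}V`,
which forces `n ≡ 0 [ZMOD p]` and so puts it in `T^{-i}V`; the reverse inclusion is symmetric.
-/

open Set Function Equiv

section

variable {X : Type*}

theorem Homeomorph.continuous_toEquiv_zpow [TopologicalSpace X] (T : X ≃ₜ X) (n : ℤ) :
    Continuous (T.toEquiv ^ n) := by
  let toPerm : (X ≃ₜ X) →* Perm X := ⟨⟨Homeomorph.toEquiv, rfl⟩, fun _ _ => rfl⟩
  have hpow : T.toEquiv ^ n = (T ^ n).toEquiv := (map_zpow toPerm T n).symm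
  rw [hpow]
  exact (T ^ n).continuous

theorem Function.Periodic.iUnion_eq_biUnion_Ico {α β : Type*} [AddCommGroup α] [LinearOrder α]
    [IsOrderedAddMonoid α] [Archimedean α] {g : α → Set β} {c : α} (hg : Periodic g c)
    (hc : 0 < c) : ⋃ a, g a = ⋃ a ∈ Ico 0 c, g a := by
  refine (iUnion_subset fun a => ?_).antisymm (iUnion₂_subset fun a _ => subset_iUnion g a)
  obtain ⟨b, hb, hab⟩ := hg.exists_mem_Ico₀ hc a
  exact hab ▸ subset_biUnion_of_mem hb

theorem Equiv.Perm.preimage_zpow_add (σ : Perm X) (m n : ℤ) (V : Set X) :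
    (σ ^ (m + n)) ⁻¹' V = (σ ^ n) ⁻¹' ((σ ^ m) ⁻¹' V) := by
  rw [zpow_add, Perm.coe_mul, preimage_comp]

theorem Equiv.Perm.iUnion_preimage_zpow_eq_univ_of_dense [TopologicalSpace X] {σ : Perm X}
    {S : Set X} {x : X} (hx : Dense (range fun n : ℤ => (σ ^ n) x)) (hxS : x ∈ S)
    (hS : IsClosed (⋃ n : ℤ, (σ ^ n) ⁻¹' S)) : ⋃ n : ℤ, (σ ^ n) ⁻¹' S = univ := by
  refine eq_univ_of_univ_subset (hx.closure_eq ▸ hS.closure_subset_iff.2 ?_)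
  rintro _ ⟨n, rfl⟩
  refine mem_iUnion.2 ⟨-n, ?_⟩
  rwa [mem_preimage, ← Perm.mul_apply, ← zpow_add, neg_add_cancel, zpow_zero, Perm.one_apply]

theorem Homeomorph.isClosed_iUnion_preimage_zpow [TopologicalSpace X] (T : X ≃ₜ X) {S : Set X}
    (hS : IsClosed S) {c : ℤ} (hc : 0 < c) (hper : Periodic (fun n => ⇑(T.toEquiv ^ n) ⁻¹' S) c) :
    IsClosed (⋃ n : ℤ, (T.toEquiv ^ n) ⁻¹' S) := by
  rw [hper.iUnion_eq_biUnion_Ico hc]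
  exact (finite_Ico 0 c).isClosed_biUnion fun n _ => hS.preimage (T.continuous_toEquiv_zpow n)

structure IsCyclicPartition (σ : Perm X) (p : ℕ) (V : Set X) : Prop where
  disjoint : ∀ i j : Fin p, i ≠ j → Disjoint ((σ ^ (i : ℤ)) ⁻¹' V) ((σ ^ (j : ℤ)) ⁻¹' V)
  iUnion_eq_univ : ⋃ i : Fin p, (σ ^ (i : ℤ)) ⁻¹' V = univ

namespace IsCyclicPartition

variable {σ : Perm X} {p : ℕ} {V W : Set X}

theorem exists_mem (h : IsCyclicPartition σ p V) (x : X) :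
    ∃ k : ℤ, 0 ≤ k ∧ k < p ∧ x ∈ (σ ^ k) ⁻¹' V := by
  obtain ⟨k, hk⟩ := mem_iUnion.1 (h.iUnion_eq_univ.symm ▸ mem_univ x)
  exact ⟨k, k.val.cast_nonneg, by exact_mod_cast k.isLt, hk⟩

theorem nonempty [Nonempty X] (h : IsCyclicPartition σ p V) : V.Nonempty :=
  let ⟨_, _, _, hx⟩ := h.exists_mem (Classical.arbitrary X)
  ⟨_, hx⟩

theorem eq_of_mem (h : IsCyclicPartition σ p V) {j k : ℤ} (hj : 0 ≤ j) (hjp : j < p) (hk : 0 ≤ k)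
    (hkp : k < p) {x : X} (hxj : x ∈ (σ ^ j) ⁻¹' V) (hxk : x ∈ (σ ^ k) ⁻¹' V) : j = k := by
  lift j to ℕ using hj
  lift k to ℕ using hk
  by_contra hne
  have hjk : (⟨j, by omega⟩ : Fin p) ≠ ⟨k, by omega⟩ := fun e => hne (by simpa using e)
  exact (h.disjoint _ _ hjk).notMem_of_mem_left hxj hxk

/-- `σ⁻¹` shifts the partition by one step, so `σ^{-p}V` has to be the piece `V` left out. -/
theorem preimage_zpow_period (h : IsCyclicPartition σ p V) : (σ ^ (p : ℤ)) ⁻¹' V = V := by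
  have step : ∀ (n : ℤ) (x : X), x ∈ (σ ^ (n + 1)) ⁻¹' V ↔ σ x ∈ (σ ^ n) ⁻¹' V := by
    intro n x
    rw [Perm.preimage_zpow_add, zpow_one]
    rfl
  ext x
  constructor
  · intro hx
    obtain ⟨k, hk0, hkp, hxk⟩ := h.exists_mem x
    obtain rfl | hk : k = 0 ∨ 1 ≤ k := by omega
    · simpa using hxk
    have hσx : σ x ∈ (σ ^ (k - 1)) ⁻¹' V := (step _ x).1 (by rwa [sub_add_cancel])
    have hσx' : σ x ∈ (σ ^ ((p : ℤ) - 1)) ⁻¹' V := (step _ x).1 (by rwa [sub_add_cancel])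
    have := h.eq_of_mem (by omega) (by omega) (by omega) (by omega) hσx hσx'
    omega
  · intro hx
    obtain ⟨k, hk0, hkp, hσx⟩ := h.exists_mem (σ x)
    obtain hk | hk : k + 1 < p ∨ k + 1 = p := by omega
    · have := h.eq_of_mem (by omega) hk le_rfl (by omega) ((step k x).2 hσx) (by simpa using hx)
      omega
    · exact hk ▸ (step k x).2 hσx

theorem preimage_zpow_add_period (h : IsCyclicPartition σ p V) (n : ℤ) :
    (σ ^ (n + p)) ⁻¹' V = (σ ^ n) ⁻¹' V := by
  rw [add_comm, Perm.preimage_zpow_add, h.preimage_zpow_period]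

theorem periodic (h : IsCyclicPartition σ p V) : Periodic (fun n : ℤ => (σ ^ n) ⁻¹' V) p :=
  h.preimage_zpow_add_period

theorem preimage_zpow_eq_of_modEq (h : IsCyclicPartition σ p V) {m n : ℤ}
    (hmn : m ≡ n [ZMOD p]) : (σ ^ m) ⁻¹' V = (σ ^ n) ⁻¹' V := by
  obtain ⟨t, ht⟩ := Int.modEq_iff_dvd.1 hmn
  rw [show n = m + t * p by linarith]
  exact (h.periodic.int_mul t m).symm

theorem modEq_of_mem (h : IsCyclicPartition σ p V) {m n : ℤ} {x : X}
    (hm : x ∈ (σ ^ m) ⁻¹' V) (hn : x ∈ (σ ^ n) ⁻¹' V) : m ≡ n [ZMOD p] := by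
  have hp : (0 : ℤ) < p := by
    obtain ⟨k, _, _, _⟩ := h.exists_mem x
    omega
  have hmod (k : ℤ) : (σ ^ k) ⁻¹' V = (σ ^ (k % p)) ⁻¹' V :=
    h.preimage_zpow_eq_of_modEq (Int.mod_modEq k p).symm
  rw [hmod] at hm hn
  exact h.eq_of_mem (Int.emod_nonneg _ hp.ne') (Int.emod_lt_of_pos _ hp)
    (Int.emod_nonneg _ hp.ne') (Int.emod_lt_of_pos _ hp) hm hn

theorem periodic_preimage_inter (hV : IsCyclicPartition σ p V) (hW : IsCyclicPartition σ p W)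
    (i : ℤ) : Periodic (fun n : ℤ => (σ ^ n) ⁻¹' (W ∩ (σ ^ i) ⁻¹' V)) p := fun n => by
  simp only [preimage_inter, ← Perm.preimage_zpow_add, ← add_assoc]
  rw [hW.preimage_zpow_add_period, hV.preimage_zpow_add_period]

theorem eq_preimage_of_iUnion_eq_univ (hV : IsCyclicPartition σ p V)
    (hW : IsCyclicPartition σ p W) {i : ℤ}
    (hcov : ⋃ n : ℤ, (σ ^ n) ⁻¹' (W ∩ (σ ^ i) ⁻¹' V) = univ) : W = (σ ^ i) ⁻¹' V := by
  ext x
  obtain ⟨n, hxn⟩ := mem_iUnion.1 (hcov.symm ▸ mem_univ x)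
  rw [preimage_inter, ← Perm.preimage_zpow_add] at hxn
  obtain ⟨hxW, hxV⟩ := hxn
  have hW0 : W = (σ ^ (0 : ℤ)) ⁻¹' W := by simp
  constructor
  · intro hx
    have hn : n ≡ 0 [ZMOD p] := hW.modEq_of_mem hxW (hW0 ▸ hx)
    rwa [hV.preimage_zpow_eq_of_modEq (hn.add_left i), add_zero] at hxV
  · intro hx
    have hn : n ≡ 0 [ZMOD p] := Int.ModEq.add_left_cancel' i (by simpa using hV.modEq_of_mem hxV hx)
    rw [hW0, ← hW.preimage_zpow_eq_of_modEq hn]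
    exact hxW

end IsCyclicPartition

end

theorem partition_unique_up_to_cyclic_permutation_general
    {X : Type*} [MetricSpace X] [Nonempty X]
    (T : X ≃ₜ X)
    (hmin : ∀ x : X, Dense (Set.range fun n : ℤ => (T.toEquiv ^ n) x))
    (p : ℕ)
    (V W : Set X) (hV : IsClosed V) (hW : IsClosed W)
    (hVdisj : ∀ i j : Fin p, i ≠ j →
      Disjoint ((fun x => (T.toEquiv ^ (i : ℤ)) x) ⁻¹' V)
        ((fun x => (T.toEquiv ^ (j : ℤ)) x) ⁻¹' V))
    (hVcov : (⋃ i : Fin p, (fun x => (T.toEquiv ^ (i : ℤ)) x) ⁻¹' V) = Set.univ)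
    (hWdisj : ∀ i j : Fin p, i ≠ j →
      Disjoint ((fun x => (T.toEquiv ^ (i : ℤ)) x) ⁻¹' W)
        ((fun x => (T.toEquiv ^ (j : ℤ)) x) ⁻¹' W))
    (hWcov : (⋃ i : Fin p, (fun x => (T.toEquiv ^ (i : ℤ)) x) ⁻¹' W) = Set.univ) :
    ∃ i : ℕ, i < p ∧ W = (fun x => (T.toEquiv ^ (i : ℤ)) x) ⁻¹' V := by
  have hVp : IsCyclicPartition T.toEquiv p V := ⟨hVdisj, hVcov⟩
  have hWp : IsCyclicPartition T.toEquiv p W := ⟨hWdisj, hWcov⟩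
  obtain ⟨x, hxW⟩ := hWp.nonempty
  obtain ⟨i, hi0, hip, hxi⟩ := hVp.exists_mem x
  have hclosed : IsClosed (⋃ n : ℤ, (T.toEquiv ^ n) ⁻¹' (W ∩ (T.toEquiv ^ i) ⁻¹' V)) :=
    T.isClosed_iUnion_preimage_zpow (hW.inter (hV.preimage (T.continuous_toEquiv_zpow i)))
      (by omega) (hVp.periodic_preimage_inter hWp i)
  have hcov : ⋃ n : ℤ, (T.toEquiv ^ n) ⁻¹' (W ∩ (T.toEquiv ^ i) ⁻¹' V) = univ :=
    Perm.iUnion_preimage_zpow_eq_univ_of_dense (hmin x) ⟨hxW, hxi⟩ hclosed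
  lift i to ℕ using hi0
  exact ⟨i, by exact_mod_cast hip, hVp.eq_preimage_of_iUnion_eq_univ hWp hcov⟩

/-- Let `(X,T)` be a minimal topological dynamical system, `p ≥ 1`. If `V` and `W` are
closed sets such that both `{V, T⁻¹V, …, T^{-p+1}V}` and `{W, T⁻¹W, …, T^{-p+1}W}` are
partitions of `X` (pairwise disjoint with union `X`), then `W = T^{-i}V` for some
`0 ≤ i < p`: the partition is unique up to cyclic permutation. -/
theorem partition_unique_up_to_cyclic_permutation
    {X : Type*} [MetricSpace X] [CompactSpace X] [Nonempty X]
    (T : X ≃ₜ X)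
    (hmin : ∀ x : X, Dense (Set.range fun n : ℤ => (T.toEquiv ^ n) x))
    (p : ℕ) (hp : 1 ≤ p)
    (V W : Set X) (hV : IsClosed V) (hW : IsClosed W)
    (hVdisj : ∀ i j : Fin p, i ≠ j →
      Disjoint ((fun x => (T.toEquiv ^ (i : ℤ)) x) ⁻¹' V)
        ((fun x => (T.toEquiv ^ (j : ℤ)) x) ⁻¹' V))
    (hVcov : (⋃ i : Fin p, (fun x => (T.toEquiv ^ (i : ℤ)) x) ⁻¹' V) = Set.univ)
    (hWdisj : ∀ i j : Fin p, i ≠ j →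
      Disjoint ((fun x => (T.toEquiv ^ (i : ℤ)) x) ⁻¹' W)
        ((fun x => (T.toEquiv ^ (j : ℤ)) x) ⁻¹' W))
    (hWcov : (⋃ i : Fin p, (fun x => (T.toEquiv ^ (i : ℤ)) x) ⁻¹' W) = Set.univ) :
    ∃ i : ℕ, i < p ∧ W = (fun x => (T.toEquiv ^ (i : ℤ)) x) ⁻¹' V :=
  partition_unique_up_to_cyclic_permutation_general T hmin p V W hV hW hVdisj hVcov hWdisj hWcov
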